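/- Let G be a square-decomposable connected graph. Then any two non-backtracking walks p, q on G with the same starting vertex and the same ending vertex satisfy p ∼_□ q. -/

import Mathlib

/-!
Instead of `phi` we use the stack normal form `reduce`. The heart of the proof is that inserting
a square anywhere into an arbitrary, possibly backtracking, word changes its normal form only up
to `∼_□`. By induction on the word this comes down to checking that prepending a single vertex,
with cancellation, respects one square move, which is a finite case analysis. Consequently `∼_□`
is a congruence for concatenation followed by reduction. Every closed walk of length at least one
contains a simple cycle as a segment; square-decomposability replaces that segment by its base
point, so by induction on length every closed walk reduces to a point. Finally, contracting the
closed walk `p ⊙ q⁻¹` inside `p ⊙ q⁻¹ ⊙ q` gives `p = φ(p ⊙ q⁻¹ ⊙ q) ∼_□ q`.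
-/

/-- An undirected graph (self-loops allowed) given by a symmetric adjacency relation. -/
structure GraphL (V : Type*) where
  Adj : V → V → Prop
  symm : ∀ {a b : V}, Adj a b → Adj b a

/-- A walk on `G`: a nonempty list of vertices with consecutive vertices adjacent.
Its length is the number of edges, i.e. `p.length - 1`. -/
def IsWalkL {V : Type*} (G : GraphL V) (p : List V) : Prop :=
  p ≠ [] ∧ p.Chain' G.Adj

/-- A cycle on `G`: a walk with equal endpoints. -/
def IsCycleL {V : Type*} (G : GraphL V) (p : List V) : Prop :=
  IsWalkL G p ∧ p.head? = p.getLast?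

/-- A simple cycle: repetitions occur only at the two endpoints. -/
def IsSimpleCycleL {V : Type*} (G : GraphL V) (p : List V) : Prop :=
  IsCycleL G p ∧
  ∀ i j : ℕ, i < j → j < p.length → p[i]? = p[j]? → i = 0 ∧ j = p.length - 1

/-- `G` is connected. -/
def GraphL.ConnectedL {V : Type*} (G : GraphL V) : Prop :=
  ∀ u v : V, ∃ p : List V, IsWalkL G p ∧ p.head? = some u ∧ p.getLast? = some v

/-- `G` is bipartite. -/
def GraphL.Bipartite {V : Type*} (G : GraphL V) : Prop :=
  ∃ f : V → Bool, ∀ a b : V, G.Adj a b → f a ≠ f b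

/-- A walk is non-backtracking when it contains no subword of the form `x y x`. -/
def NonBacktracking {V : Type*} (p : List V) : Prop :=
  ¬ ∃ (l r : List V) (a b : V), p = l ++ a :: b :: a :: r

/-- One spine removal: replace some subword `a b a` by `a`. -/
def SpineStep {V : Type*} (p q : List V) : Prop :=
  ∃ (l r : List V) (a b : V), p = l ++ a :: b :: a :: r ∧ q = l ++ a :: r

open Classical in
/-- Backtrack removal `φ`: a non-backtracking walk obtained from `p` by repeatedly
removing spines (well defined since the normal form is unique). -/
noncomputable def phi {V : Type*} (p : List V) : List V :=
  if h : ∃ q : List V, Relation.ReflTransGen SpineStep p q ∧ NonBacktracking q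
  then h.choose else p

/-- A square: a non-backtracking cycle of length four. -/
def IsSquareCycle {V : Type*} (G : GraphL V) (s : List V) : Prop :=
  IsWalkL G s ∧ NonBacktracking s ∧ s.length = 5 ∧ s.head? = s.getLast?

/-- `c ⊕_k s`: insert the cycle `s` into the walk `c` at position `k`
(requires `c_k = s_0` to be meaningful). -/
def oplus {V : Type*} (c : List V) (k : ℕ) (s : List V) : List V :=
  c.take k ++ s ++ c.drop (k + 1)

/-- Two non-backtracking walks `p, q` differ by a square when
`q = φ(p ⊕_k s)` or `p = φ(q ⊕_k s)` for some index `k` and square `s`. -/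
def DifferSq {V : Type*} (G : GraphL V) (p q : List V) : Prop :=
  (∃ (k : ℕ) (s : List V), IsSquareCycle G s ∧ p[k]? = s.head? ∧ q = phi (oplus p k s)) ∨
  (∃ (k : ℕ) (s : List V), IsSquareCycle G s ∧ q[k]? = s.head? ∧ p = phi (oplus q k s))

/-- `G` is square-decomposable: every simple cycle is equivalent, under the
reflexive-transitive closure of `DifferSq`, to a trivial cycle of length 0. -/
def SquareDecomposable {V : Type*} (G : GraphL V) : Prop :=
  ∀ c : List V, IsSimpleCycleL G c →
    ∃ v : V, Relation.ReflTransGen (DifferSq G) c [v]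

section NonBacktracking

variable {V : Type*}

theorem nonBacktracking_nil : NonBacktracking ([] : List V) := by
  rintro ⟨l, r, a, b, h⟩
  simp at h

theorem nonBacktracking_cons_iff {a : V} {w : List V} :
    NonBacktracking (a :: w) ↔ NonBacktracking w ∧ w[1]? ≠ some a := by
  constructor
  · intro h
    refine ⟨fun ⟨l, r, x, y, hw⟩ => h ⟨a :: l, r, x, y, by simp [hw]⟩, fun h1 => h ?_⟩
    obtain ⟨b, c, t, rfl, rfl⟩ : ∃ b c t, w = b :: c :: t ∧ c = a := by
      match w, h1 with
      | b :: c :: t, h1 => exact ⟨b, c, t, rfl, by simpa using h1⟩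
    exact ⟨[], t, c, b, rfl⟩
  · rintro ⟨hw, h1⟩ ⟨l, r, x, y, he⟩
    cases l with
    | nil => cases he; simp at h1
    | cons c l => cases he; exact hw ⟨l, r, x, y, rfl⟩

theorem SpineStep.cons {x y : List V} (a : V) (h : SpineStep x y) :
    SpineStep (a :: x) (a :: y) := by
  obtain ⟨l, r, b, c, rfl, rfl⟩ := h
  exact ⟨a :: l, r, b, c, rfl, rfl⟩

end NonBacktracking

section Reduction

variable {V : Type*} [DecidableEq V]

def reduceCons (a : V) : List V → List V
  | b :: c :: t => if c = a then a :: t else a :: b :: c :: t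
  | w => a :: w

/-- Backtrack removal as a right fold: the word is read from the right like a stack, and each
new vertex cancels a spine it closes. `phi_eq_reduce` identifies it with `phi`. -/
def reduce : List V → List V := List.foldr reduceCons []

@[simp] theorem reduce_cons (a : V) (l : List V) : reduce (a :: l) = reduceCons a (reduce l) := rfl

theorem reduceCons_cons_cons_self (a b : V) (t : List V) : reduceCons a (b :: a :: t) = a :: t := by
  simp [reduceCons]

theorem reduceCons_of_nonBacktracking {a : V} {w : List V} (h : NonBacktracking (a :: w)) :
    reduceCons a w = a :: w := by
  match w, h with
  | [], _ => rfl
  | [_], _ => rfl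
  | b :: c :: t, h =>
    have hc : c ≠ a := fun hc => (nonBacktracking_cons_iff.1 h).2 (by simp [hc])
    simp [reduceCons, hc]

theorem exists_reduceCons_eq_cons (a : V) (w : List V) : ∃ t, reduceCons a w = a :: t := by
  unfold reduceCons
  split
  · split_ifs <;> exact ⟨_, rfl⟩
  · exact ⟨_, rfl⟩

theorem NonBacktracking.reduceCons {w : List V} (a : V) (h : NonBacktracking w) :
    NonBacktracking (reduceCons a w) := by
  match w, h with
  | [], _ => exact nonBacktracking_cons_iff.2 ⟨nonBacktracking_nil, by simp⟩
  | [b], h => exact nonBacktracking_cons_iff.2 ⟨h, by simp⟩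
  | b :: c :: t, h =>
    by_cases hc : c = a
    · subst hc
      rw [reduceCons_cons_cons_self]
      exact (nonBacktracking_cons_iff.1 h).1
    · simp only [_root_.reduceCons, hc, if_false]
      exact nonBacktracking_cons_iff.2 ⟨h, by simp [hc]⟩

theorem nonBacktracking_reduce (x : List V) : NonBacktracking (reduce x) := by
  induction x with
  | nil => exact nonBacktracking_nil
  | cons a l ih => exact ih.reduceCons a

theorem reduce_eq_self {x : List V} (h : NonBacktracking x) : reduce x = x := by
  induction x with
  | nil => rfl
  | cons a l ih =>
    rw [reduce_cons, ih (nonBacktracking_cons_iff.1 h).1, reduceCons_of_nonBacktracking h]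

@[simp] theorem reduce_reduce (x : List V) : reduce (reduce x) = reduce x :=
  reduce_eq_self (nonBacktracking_reduce x)

theorem head?_reduce (x : List V) : (reduce x).head? = x.head? := by
  cases x with
  | nil => rfl
  | cons a l => obtain ⟨t, ht⟩ := exists_reduceCons_eq_cons a (reduce l); simp [ht]

theorem reduceCons_reduceCons_reduceCons {u : List V} (a b : V) (hu : NonBacktracking u) :
    reduceCons a (reduceCons b (reduceCons a u)) = reduceCons a u := by
  obtain ⟨t, ht⟩ := exists_reduceCons_eq_cons a u
  have hnb : NonBacktracking (a :: t) := ht ▸ hu.reduceCons a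
  rw [ht]
  match t, hnb with
  | [], _ => simp [_root_.reduceCons]
  | e :: t', hnb =>
    by_cases he : e = b
    · subst he
      rw [reduceCons_cons_cons_self, reduceCons_of_nonBacktracking hnb]
    · simp [_root_.reduceCons, he]

theorem reduce_cons_cons_self (a b : V) (l : List V) :
    reduce (a :: b :: a :: l) = reduce (a :: l) :=
  reduceCons_reduceCons_reduceCons a b (nonBacktracking_reduce l)

theorem reduce_append_reduce (l r : List V) : reduce (l ++ reduce r) = reduce (l ++ r) := by
  induction l with
  | nil => exact reduce_reduce r
  | cons a l ih => simp only [List.cons_append, reduce_cons, ih]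

theorem reduce_append_cons_cons_self (l r : List V) (a b : V) :
    reduce (l ++ a :: b :: a :: r) = reduce (l ++ a :: r) := by
  rw [← reduce_append_reduce, reduce_cons_cons_self, reduce_append_reduce]

theorem reduce_reduceCons_append (a : V) (y r : List V) :
    reduce (reduceCons a y ++ r) = reduce (a :: (y ++ r)) := by
  unfold reduceCons
  split
  · split_ifs with h
    · subst h; exact (reduce_cons_cons_self _ _ _).symm
    · rfl
  · rfl

theorem reduce_reduce_append (x r : List V) : reduce (reduce x ++ r) = reduce (x ++ r) := by
  induction x with
  | nil => rfl
  | cons a x ih =>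
    rw [reduce_cons, reduce_reduceCons_append, List.cons_append, reduce_cons, reduce_cons, ih]

theorem reduce_append_reduce_append (l x r : List V) :
    reduce (l ++ reduce x ++ r) = reduce (l ++ x ++ r) := by
  rw [List.append_assoc, ← reduce_append_reduce, reduce_reduce_append, reduce_append_reduce,
    List.append_assoc]

theorem reduce_append_append_reverse_tail (l : List V) (a : V) (w r : List V) :
    reduce (l ++ (a :: w) ++ (a :: w).reverse.tail ++ r) = reduce (l ++ a :: r) := by
  induction w generalizing l a r with
  | nil => simp
  | cons b w ih =>
    have hb : (b :: w).reverse ≠ [] := by simp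
    have := ih (l ++ [a]) b (a :: r)
    rw [List.reverse_cons, List.tail_append_of_ne_nil hb]
    simp only [List.append_assoc, List.cons_append, List.nil_append] at this ⊢
    rw [this, reduce_append_cons_cons_self]

theorem reduce_append_reverse_append_tail (l : List V) {q : List V} {v : V}
    (hv : q.getLast? = some v) : reduce (l ++ q.reverse ++ q.tail) = reduce (l ++ [v]) := by
  obtain ⟨q₁, hq₁⟩ := List.head?_eq_some_iff.1 (by rw [List.head?_reverse, hv])
  rw [hq₁, show q = (v :: q₁).reverse by rw [← hq₁, List.reverse_reverse],
    ← List.append_nil (_ ++ _), reduce_append_append_reverse_tail]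

theorem SpineStep.reduce_eq {x y : List V} (h : SpineStep x y) : reduce x = reduce y := by
  obtain ⟨l, r, a, b, rfl, rfl⟩ := h
  exact reduce_append_cons_cons_self l r a b

theorem reflTransGen_spineStep_reduceCons (a : V) (w : List V) :
    Relation.ReflTransGen SpineStep (a :: w) (reduceCons a w) := by
  match w with
  | [] | [_] => exact .refl
  | b :: c :: t =>
    by_cases h : c = a
    · subst h
      rw [reduceCons_cons_cons_self]
      exact .single ⟨[], t, c, b, rfl, rfl⟩
    · simp only [reduceCons, h, if_false]
      exact .refl

theorem reflTransGen_spineStep_reduce (x : List V) :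
    Relation.ReflTransGen SpineStep x (reduce x) := by
  induction x with
  | nil => exact .refl
  | cons a l ih =>
    exact (ih.lift _ fun _ _ h => h.cons a).trans (reflTransGen_spineStep_reduceCons a (reduce l))

theorem reduce_eq_of_reflTransGen_spineStep {x y : List V}
    (h : Relation.ReflTransGen SpineStep x y) : reduce x = reduce y := by
  induction h with
  | refl => rfl
  | tail _ hyz ih => exact ih.trans hyz.reduce_eq

theorem phi_eq_reduce (x : List V) : phi x = reduce x := by
  have hex : ∃ y, Relation.ReflTransGen SpineStep x y ∧ NonBacktracking y :=
    ⟨reduce x, reflTransGen_spineStep_reduce x, nonBacktracking_reduce x⟩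
  obtain ⟨hstep, hnb⟩ := hex.choose_spec
  rw [phi, dif_pos hex, ← reduce_eq_self hnb, reduce_eq_of_reflTransGen_spineStep hstep]

end Reduction

section Walks

variable {V : Type*} {G : GraphL V}

theorem isWalkL_iff {p : List V} : IsWalkL G p ↔ p ≠ [] ∧ p.IsChain G.Adj := Iff.rfl

theorem IsWalkL.reverse {p : List V} (h : IsWalkL G p) : IsWalkL G p.reverse :=
  ⟨by simpa using h.1, List.isChain_reverse.2 (h.2.imp fun _ _ => G.symm)⟩

theorem IsWalkL.append_reverse {p₀ q : List V} {v : V} (hp : IsWalkL G (p₀ ++ [v]))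
    (hq : IsWalkL G q) (hv : q.getLast? = some v) : IsWalkL G (p₀ ++ q.reverse) := by
  obtain ⟨q₁, hq₁⟩ := List.head?_eq_some_iff.1 (by rw [List.head?_reverse, hv])
  have hvq : ([v] ++ q₁).IsChain G.Adj := by
    rw [List.singleton_append, ← hq₁]; exact hq.reverse.2
  rw [isWalkL_iff, hq₁, ← List.singleton_append, ← List.append_assoc]
  exact ⟨by simp, hp.2.append_overlap hvq (List.cons_ne_nil v [])⟩

theorem IsWalkL.append_singleton_append {A σ B : List V} {w : V} (h : IsWalkL G (A ++ σ ++ B))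
    (hhead : σ.head? = some w) (hlast : σ.getLast? = some w) : IsWalkL G (A ++ [w] ++ B) := by
  obtain ⟨σ₁, rfl⟩ := List.head?_eq_some_iff.1 hhead
  obtain ⟨σ₀, hσ₀⟩ := List.getLast?_eq_some_iff.1 hlast
  have hchain := h.2
  refine ⟨by simp, List.IsChain.append_overlap ?_ ?_ (List.cons_ne_nil w [])⟩
  · exact hchain.infix ⟨[], σ₁ ++ B, by simp⟩
  · exact hchain.infix ⟨A ++ σ₀, [], by rw [hσ₀]; simp⟩

theorem exists_isSimpleCycleL_infix {γ : List V} (hγ : IsWalkL G γ)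
    (hclosed : γ.head? = γ.getLast?) (hlen : 2 ≤ γ.length) :
    ∃ σ, σ <:+: γ ∧ 2 ≤ σ.length ∧ IsSimpleCycleL G σ := by
  induction h : γ.length using Nat.strong_induction_on generalizing γ with
  | _ n ih =>
  by_cases hs : IsSimpleCycleL G γ
  · exact ⟨γ, List.infix_refl γ, hlen, hs⟩
  simp only [IsSimpleCycleL, IsCycleL, hγ, hclosed, true_and] at hs
  push Not at hs
  obtain ⟨i, j, hij, hj, heq, hne⟩ := hs
  set σ := (γ.drop i).take (j - i + 1)
  have hσlen : σ.length = j - i + 1 := by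
    simp only [σ, List.length_take, List.length_drop]; omega
  have hinf : σ <:+: γ := (List.take_prefix _ _).isInfix.trans (List.drop_suffix _ _).isInfix
  have hσwalk : IsWalkL G σ :=
    ⟨List.ne_nil_of_length_pos (by omega), hγ.2.infix hinf⟩
  have hσcl : σ.head? = σ.getLast? := by
    rw [List.getLast?_eq_getElem?, hσlen, List.head?_eq_getElem?]
    simp [σ, List.getElem?_drop, heq, Nat.add_sub_cancel' hij.le]
  obtain ⟨τ, hτ, hτlen, hτs⟩ := ih σ.length (by omega) hσwalk hσcl (by omega) rfl
  exact ⟨τ, hτ.trans hinf, hτlen, hτs⟩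

end Walks

section Squares

variable {V : Type*} {G : GraphL V}

theorem IsSquareCycle.exists_eq {s : List V} (hs : IsSquareCycle G s) :
    ∃ a b c d, s = [a, b, c, d, a] := by
  obtain ⟨-, -, hlen, hcl⟩ := hs
  match s, hlen with
  | [a, b, c, d, e], _ => exact ⟨a, b, c, d, by simp_all⟩

theorem isSquareCycle_iff {a b c d : V} :
    IsSquareCycle G [a, b, c, d, a] ↔
      G.Adj a b ∧ G.Adj b c ∧ G.Adj c d ∧ G.Adj d a ∧ a ≠ c ∧ b ≠ d := by
  simp only [IsSquareCycle, isWalkL_iff, nonBacktracking_cons_iff]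
  grind [nonBacktracking_nil]

theorem IsSquareCycle.rotate {a b c d : V} (hs : IsSquareCycle G [a, b, c, d, a]) :
    IsSquareCycle G [b, c, d, a, b] := by
  rw [isSquareCycle_iff] at hs ⊢
  tauto

theorem IsSquareCycle.reverse {a b c d : V} (hs : IsSquareCycle G [a, b, c, d, a]) :
    IsSquareCycle G [a, d, c, b, a] := by
  rw [isSquareCycle_iff] at hs ⊢
  obtain ⟨hab, hbc, hcd, hda, hac, hbd⟩ := hs
  exact ⟨G.symm hda, G.symm hcd, G.symm hbc, G.symm hab, hac, hbd.symm⟩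

theorem head?_oplus {x s : List V} {k : ℕ} (h : x[k]? = s.head?) :
    (oplus x k s).head? = x.head? := by
  match x, k with
  | [], _ => simp_all [oplus, eq_comm]
  | a :: x, 0 =>
    obtain ⟨t, rfl⟩ := List.head?_eq_some_iff.1 h.symm
    rfl
  | _ :: _, _ + 1 => rfl

theorem append_oplus_append (L R : List V) {p : List V} {k : ℕ} (hk : k < p.length) (s : List V) :
    L ++ oplus p k s ++ R = oplus (L ++ p ++ R) (L.length + k) s := by
  simp only [oplus, List.append_assoc, List.take_length_add_append,
    List.take_append_of_le_length hk.le, Nat.add_assoc, List.drop_length_add_append,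
    List.drop_append_of_le_length (Nat.succ_le_of_lt hk)]

end Squares

/-- The moves of `DifferSq` out of a non-backtracking word. Working with these rather than with
`DifferSq`, whose backward moves start from arbitrary words, is what makes the equivalence they
generate compatible with `reduceCons`. -/
def SquareStep {V : Type*} (G : GraphL V) (Y Y' : List V) : Prop :=
  NonBacktracking Y ∧
    ∃ (k : ℕ) (s : List V), IsSquareCycle G s ∧ Y[k]? = s.head? ∧ Y' = phi (oplus Y k s)

section SquareStep

open Relation

variable {V : Type*} {G : GraphL V}

theorem SquareStep.differSq {Y Y' : List V} (h : SquareStep G Y Y') : DifferSq G Y Y' :=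
  Or.inl h.2

theorem DifferSq.symm {p q : List V} (h : DifferSq G p q) : DifferSq G q p := Or.symm h

theorem reflTransGen_differSq_of_eqvGen_squareStep {p q : List V}
    (h : EqvGen (SquareStep G) p q) : ReflTransGen (DifferSq G) p q := by
  have : Std.Symm (DifferSq G) := ⟨fun _ _ h => h.symm⟩
  rw [← EqvGen.eqvGen_eq_reflTransGen]
  exact EqvGen.mono (fun _ _ h => h.differSq) _ _ h

theorem DifferSq.head?_eq {p q : List V} (h : DifferSq G p q) : p.head? = q.head? := by
  classical
  have hphi : ∀ {x s : List V} {k : ℕ}, IsSquareCycle G s → x[k]? = s.head? →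
      (phi (oplus x k s)).head? = x.head? := fun hs hk => by
    rw [phi_eq_reduce, head?_reduce, head?_oplus hk]
  rcases h with ⟨k, s, hs, hk, rfl⟩ | ⟨k, s, hs, hk, rfl⟩
  · exact (hphi hs hk).symm
  · exact hphi hs hk

theorem head?_eq_of_reflTransGen_differSq {p q : List V} (h : ReflTransGen (DifferSq G) p q) :
    p.head? = q.head? := by
  induction h with
  | refl => rfl
  | tail _ h ih => exact ih.trans h.head?_eq

variable [DecidableEq V]

theorem squareStep_reduce_oplus {Y s : List V} {k : ℕ} (hY : NonBacktracking Y)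
    (hs : IsSquareCycle G s) (hk : Y[k]? = s.head?) : SquareStep G Y (reduce (oplus Y k s)) :=
  ⟨hY, k, s, hs, hk, (phi_eq_reduce _).symm⟩

/-- Prepending `c` to `d :: c :: Y` cancels the vertex `d` at which a square is inserted. -/
theorem eqvGen_squareStep_cons_cons_square {c d t₁ t₂ t₃ : V} {Y : List V}
    (hY : NonBacktracking (d :: c :: Y)) (hs : IsSquareCycle G [d, t₁, t₂, t₃, d]) :
    EqvGen (SquareStep G) (c :: Y) (reduce (c :: d :: t₁ :: t₂ :: t₃ :: d :: c :: Y)) := by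
  have hcY := (nonBacktracking_cons_iff.1 hY).1
  by_cases h₁ : t₁ = c
  · subst h₁
    refine .rel _ _ ?_
    rw [reduce_cons_cons_self]
    exact squareStep_reduce_oplus (k := 0) hcY hs.rotate rfl
  by_cases h₃ : t₃ = c
  · subst t₃
    refine .rel _ _ ?_
    rw [show c :: d :: t₁ :: t₂ :: c :: d :: c :: Y = [c, d, t₁, t₂] ++ c :: d :: c :: Y
      from rfl, reduce_append_cons_cons_self]
    exact squareStep_reduce_oplus (k := 0) hcY hs.rotate.rotate.rotate rfl
  -- otherwise the inserted word is already reduced, and removing the reversed square from it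
  -- backtracks to `c :: Y`
  have hadj := isSquareCycle_iff.1 hs
  have hW : NonBacktracking (c :: d :: t₁ :: t₂ :: t₃ :: d :: c :: Y) := by
    simp only [nonBacktracking_cons_iff] at hY ⊢
    simp_all [eq_comm, Ne.symm]
  rw [reduce_eq_self hW]
  refine .symm _ _ (.rel _ _ ?_)
  have := squareStep_reduce_oplus (k := 1) hW hs.reverse rfl
  rwa [show oplus (c :: d :: t₁ :: t₂ :: t₃ :: d :: c :: Y) 1 [d, t₃, t₂, t₁, d]
      = [c] ++ (d :: [t₃, t₂, t₁, d]) ++ (d :: [t₃, t₂, t₁, d]).reverse.tail ++ c :: Y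
      from rfl,
    reduce_append_append_reverse_tail, List.singleton_append, reduce_cons_cons_self,
    reduce_eq_self hcY] at this

theorem SquareStep.eqvGen_reduceCons {Y Y' : List V} (h : SquareStep G Y Y') (c : V) :
    EqvGen (SquareStep G) (reduceCons c Y) (reduceCons c Y') := by
  obtain ⟨hY, k, s, hs, hk, rfl⟩ := h
  rw [phi_eq_reduce, ← reduce_cons]
  by_cases hcY : NonBacktracking (c :: Y)
  · rw [reduceCons_of_nonBacktracking hcY]
    exact .rel _ _ (squareStep_reduce_oplus (k := k + 1) hcY hs hk)
  obtain ⟨d, Y, rfl⟩ : ∃ d Y₂, Y = d :: c :: Y₂ := by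
    simp only [nonBacktracking_cons_iff, hY, true_and, not_not] at hcY
    match Y, hcY with
    | d :: _ :: Y₂, h => exact ⟨d, Y₂, by simp_all⟩
  have hcY := (nonBacktracking_cons_iff.1 hY).1
  rw [reduceCons_cons_cons_self]
  cases k with
  | zero =>
    obtain ⟨d', t₁, t₂, t₃, rfl⟩ := hs.exists_eq
    obtain rfl : d = d' := by simpa using hk
    exact eqvGen_squareStep_cons_cons_square hY hs
  | succ k =>
    obtain ⟨T, hT⟩ := List.head?_eq_some_iff.1 ((head?_oplus (x := c :: Y) hk).trans rfl)
    refine .rel _ _ ?_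
    rw [show c :: oplus (d :: c :: Y) (k + 1) s = c :: d :: oplus (c :: Y) k s from rfl, hT,
      reduce_cons_cons_self, ← hT]
    exact squareStep_reduce_oplus hcY hs hk

theorem eqvGen_squareStep_reduceCons {Y Y' : List V} (h : EqvGen (SquareStep G) Y Y') (c : V) :
    EqvGen (SquareStep G) (reduceCons c Y) (reduceCons c Y') := by
  induction h with
  | rel _ _ h => exact h.eqvGen_reduceCons c
  | refl => exact .refl _
  | symm _ _ _ ih => exact .symm _ _ ih
  | trans _ _ _ _ _ ih₁ ih₂ => exact .trans _ _ _ ih₁ ih₂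

theorem eqvGen_squareStep_reduce_oplus {s : List V} (hs : IsSquareCycle G s) :
    ∀ {x : List V} {k : ℕ}, x[k]? = s.head? →
      EqvGen (SquareStep G) (reduce x) (reduce (oplus x k s))
  | [], k, h => by
    obtain ⟨a, b, c, d, rfl⟩ := hs.exists_eq
    simp at h
  | c :: x, 0, h => by
    obtain ⟨c', t₁, t₂, t₃, rfl⟩ := hs.exists_eq
    obtain rfl : c = c' := by simpa using h
    obtain ⟨t, ht⟩ := exists_reduceCons_eq_cons c (reduce x)
    have hred : reduce (oplus (reduce (c :: x)) 0 [c, t₁, t₂, t₃, c])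
        = reduce (oplus (c :: x) 0 [c, t₁, t₂, t₃, c]) := by
      rw [reduce_cons, ht]
      change reduce ([c, t₁, t₂, t₃] ++ c :: t) = reduce ([c, t₁, t₂, t₃] ++ c :: x)
      rw [← ht, ← reduce_cons, reduce_append_reduce]
    rw [← hred]
    exact .rel _ _ (squareStep_reduce_oplus (nonBacktracking_reduce _) hs (by simp [ht]))
  | c :: x, k + 1, h =>
    eqvGen_squareStep_reduceCons (eqvGen_squareStep_reduce_oplus hs (x := x) (k := k) h) c

theorem eqvGen_squareStep_reduce_append_phi_oplus (L R : List V) {p s : List V} {k : ℕ}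
    (hs : IsSquareCycle G s) (hk : p[k]? = s.head?) :
    EqvGen (SquareStep G) (reduce (L ++ p ++ R)) (reduce (L ++ phi (oplus p k s) ++ R)) := by
  have hlt : k < p.length := by
    obtain ⟨a, b, c, d, rfl⟩ := hs.exists_eq
    exact (List.getElem?_eq_some_iff.1 hk).1
  rw [phi_eq_reduce, reduce_append_reduce_append, append_oplus_append L R hlt s]
  refine eqvGen_squareStep_reduce_oplus hs ?_
  rwa [List.append_assoc, List.getElem?_append_right (by omega), Nat.add_sub_cancel_left,
    List.getElem?_append_left hlt]

theorem DifferSq.eqvGen_reduce_append {p q : List V} (h : DifferSq G p q) (L R : List V) :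
    EqvGen (SquareStep G) (reduce (L ++ p ++ R)) (reduce (L ++ q ++ R)) := by
  rcases h with ⟨k, s, hs, hk, rfl⟩ | ⟨k, s, hs, hk, rfl⟩
  · exact eqvGen_squareStep_reduce_append_phi_oplus L R hs hk
  · exact .symm _ _ (eqvGen_squareStep_reduce_append_phi_oplus L R hs hk)

theorem eqvGen_squareStep_reduce_append {p q : List V} (h : ReflTransGen (DifferSq G) p q)
    (L R : List V) : EqvGen (SquareStep G) (reduce (L ++ p ++ R)) (reduce (L ++ q ++ R)) := by
  induction h with
  | refl => exact .refl _
  | tail _ h ih => exact .trans _ _ _ ih (h.eqvGen_reduce_append L R)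

theorem eqvGen_squareStep_reduce_singleton_of_closed (hsq : SquareDecomposable G)
    {γ : List V} {u : V} (hγ : IsWalkL G γ) (hhead : γ.head? = some u)
    (hlast : γ.getLast? = some u) :
    EqvGen (SquareStep G) (reduce γ) [u] := by
  induction h : γ.length using Nat.strong_induction_on generalizing γ with
  | _ n ih =>
  by_cases hlen : γ.length < 2
  · obtain rfl : γ = [u] := by
      match γ, hlen with
      | [], _ => simp at hhead
      | [a], _ => simpa using hhead
    exact .refl _
  obtain ⟨σ, ⟨A, B, rfl⟩, hσlen, hσ⟩ :=
    exists_isSimpleCycleL_infix hγ (hhead.trans hlast.symm) (by omega)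
  obtain ⟨w, hw⟩ : ∃ w, σ.head? = some w := by cases σ <;> simp_all
  have hw' : σ.getLast? = some w := hσ.1.2 ▸ hw
  obtain ⟨v, hv⟩ := hsq σ hσ
  obtain rfl : v = w := by simpa [hw] using (head?_eq_of_reflTransGen_differSq hv).symm
  refine .trans _ _ _ (eqvGen_squareStep_reduce_append hv A B)
    (ih _ ?_ (hγ.append_singleton_append hw hw') ?_ ?_ rfl)
  · simp only [List.length_append, List.length_cons, List.length_nil] at h ⊢; omega
  · simpa [List.head?_append, hw] using hhead
  · simpa [List.getLast?_append, List.getLast?_cons, hw'] using hlast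

end SquareStep

theorem stmt_12_general {V : Type*} (G : GraphL V)
    (hsq : SquareDecomposable G) (p q : List V)
    (hp : IsWalkL G p) (hq : IsWalkL G q)
    (hnp : NonBacktracking p) (hnq : NonBacktracking q)
    (hstart : p.head? = q.head?) (hend : p.getLast? = q.getLast?) :
    Relation.ReflTransGen (DifferSq G) p q := by
  classical
  obtain ⟨u, hu⟩ : ∃ u, p.head? = some u := ⟨_, List.head?_eq_some_head hp.1⟩
  obtain ⟨v, hv⟩ : ∃ v, p.getLast? = some v := ⟨_, List.getLast?_eq_some_getLast hp.1⟩
  obtain ⟨p₀, rfl⟩ := List.getLast?_eq_some_iff.1 hv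
  have hqv : q.getLast? = some v := hend ▸ hv
  have hγ : Relation.EqvGen (SquareStep G) (reduce (p₀ ++ q.reverse)) [u] :=
    eqvGen_squareStep_reduce_singleton_of_closed hsq (hp.append_reverse hq hqv)
      (by simpa [List.head?_append, List.head?_reverse, hqv] using hu)
      (by rw [List.getLast?_append, List.getLast?_reverse, ← hstart, hu, Option.some_or])
  have h :=
    eqvGen_squareStep_reduce_append (reflTransGen_differSq_of_eqvGen_squareStep hγ) [] q.tail
  rw [List.nil_append, List.nil_append, reduce_reduce_append,
    reduce_append_reverse_append_tail _ hqv, List.singleton_append,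
    List.cons_head?_tail (hstart ▸ hu), reduce_eq_self hnp, reduce_eq_self hnq] at h
  exact reflTransGen_differSq_of_eqvGen_squareStep h

/-- In a square-decomposable connected graph, any two non-backtracking walks with
the same starting vertex and the same ending vertex are `∼_□`-equivalent. -/
theorem stmt_12 {V : Type*} (G : GraphL V) (hconn : G.ConnectedL)
    (hsq : SquareDecomposable G) (p q : List V)
    (hp : IsWalkL G p) (hq : IsWalkL G q)
    (hnp : NonBacktracking p) (hnq : NonBacktracking q)
    (hstart : p.head? = q.head?) (hend : p.getLast? = q.getLast?) :
    Relation.ReflTransGen (DifferSq G) p q :=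
  stmt_12_general G hsq p q hp hq hnp hnq hstart hend
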